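/- Let Ω_h = {(x,y) ∈ ℝ² : x² + y² < 1, y > 0} be the open upper half disk, identified with a subset of ℂ via z = x + iy. If γ ∈ L²(Ω_h) satisfies ∫_{Ω_h} γ(z) ⟨∇Im(z^n), ∇Im(z^k)⟩ dz = 0 for all integers n, k ≥ 1, then γ = 0 almost everywhere on Ω_h. In other words, γ is uniquely determined by the linearized incomplete Dirichlet-to-Neumann data generated by the boundary functions sin(nφ), φ ∈ [0, π], on the upper half circle with homogeneous Dirichlet values on the flat part of the boundary. -/

import Mathlib

/-!
The gradients of `Im zᵃ⁺¹` and `Im zᵇ⁺¹` have inner product `(a+1)(b+1) Re(zᵃ z̄ᵇ)`, so `γ` is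
orthogonal on `Ω_h` to the real span of the functions `Re(zᵃ z̄ᵇ)`. Since
`Re u · Re v = (Re (u v) + Re (u v̄)) / 2`, this span is an algebra; it contains `x = Re z` and
`2 y² = |z|² - Re z²`, so it separates the points of the closed upper half disk, where `y ≥ 0`.
By Stone–Weierstrass it is uniformly dense in the continuous functions there, hence
`∫ γ g = 0` for every continuous `g`, and `γ = 0` almost everywhere.
-/

open MeasureTheory ComplexConjugate
open scoped RealInnerProductSpace

theorem exists_mem_subalgebra_near_of_isCompact_of_separatesPointsOn
    {X : Type*} [TopologicalSpace X] {K : Set X} {A : Subalgebra ℝ C(X, ℝ)} (hK : IsCompact K)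
    (hA : ∀ x ∈ K, ∀ y ∈ K, x ≠ y → ∃ f ∈ A, f x ≠ f y) (g : C(X, ℝ)) {ε : ℝ} (hε : 0 < ε) :
    ∃ f ∈ A, ∀ x ∈ K, |f x - g x| < ε := by
  have : CompactSpace K := isCompact_iff_compactSpace.mp hK
  let restrictK : C(X, ℝ) →⋆ₐ[ℝ] C(K, ℝ) :=
    ContinuousMap.compStarAlgHom' ℝ ℝ ⟨Subtype.val, continuous_subtype_val⟩
  have hsep : (A.map restrictK.toAlgHom).SeparatesPoints := by
    intro x y hxy
    obtain ⟨f, hfA, hfxy⟩ := hA x x.2 y y.2 (Subtype.coe_ne_coe.mpr hxy)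
    exact ⟨_, ⟨restrictK f, ⟨f, hfA, rfl⟩, rfl⟩, hfxy⟩
  obtain ⟨⟨_, f, hfA, rfl⟩, hf⟩ :=
    ContinuousMap.exists_mem_subalgebra_near_continuous_of_separatesPoints _ hsep
      (K.domRestrict g) g.continuous.continuousOn.domRestrict ε hε
  exact ⟨f, hfA, fun x hx => hf ⟨x, hx⟩⟩

section IntegralAgainstContinuous

variable {X : Type*} [TopologicalSpace X] [MeasurableSpace X] [OpensMeasurableSpace X]
  {μ : Measure X} {K : Set X} {γ : X → ℝ}

theorem MeasureTheory.Integrable.mul_continuousMap_of_ae_mem (hK : IsCompact K)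
    (hμK : ∀ᵐ x ∂μ, x ∈ K) (hγ : Integrable γ μ) (f : C(X, ℝ)) :
    Integrable (fun x => γ x * f x) μ := by
  obtain ⟨C, hC⟩ := hK.exists_bound_of_continuousOn f.continuous.continuousOn
  exact hγ.mul_bdd f.continuous.aestronglyMeasurable (hμK.mono fun x hx => hC x hx)

theorem integral_mul_eq_zero_of_mem_span (hK : IsCompact K) (hμK : ∀ᵐ x ∂μ, x ∈ K)
    (hγ : Integrable γ μ) {S : Set C(X, ℝ)} (hS : ∀ f ∈ S, ∫ x, γ x * f x ∂μ = 0)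
    {f : C(X, ℝ)} (hf : f ∈ Submodule.span ℝ S) : ∫ x, γ x * f x ∂μ = 0 := by
  induction hf using Submodule.span_induction with
  | mem f hf => exact hS f hf
  | zero => simp
  | add f g _ _ hf hg =>
    simp only [ContinuousMap.add_apply, mul_add]
    rw [integral_add (hγ.mul_continuousMap_of_ae_mem hK hμK f)
      (hγ.mul_continuousMap_of_ae_mem hK hμK g), hf, hg, add_zero]
  | smul c f _ hf =>
    simp only [ContinuousMap.smul_apply, smul_eq_mul, mul_left_comm _ c]
    rw [integral_const_mul, hf, mul_zero]

theorem integral_mul_eq_zero_of_forall_mem_subalgebra (hK : IsCompact K)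
    (hμK : ∀ᵐ x ∂μ, x ∈ K) (hγ : Integrable γ μ) {A : Subalgebra ℝ C(X, ℝ)}
    (hA : ∀ x ∈ K, ∀ y ∈ K, x ≠ y → ∃ f ∈ A, f x ≠ f y)
    (hγA : ∀ f ∈ A, ∫ x, γ x * f x ∂μ = 0) (g : C(X, ℝ)) : ∫ x, γ x * g x ∂μ = 0 := by
  refine eq_of_forall_dist_le fun ε hε => ?_
  obtain ⟨f, hfA, hfg⟩ := exists_mem_subalgebra_near_of_isCompact_of_separatesPointsOn hK hA g
    (div_pos hε (by positivity : (0 : ℝ) < ∫ x, |γ x| ∂μ + 1))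
  set C := ∫ x, |γ x| ∂μ
  have hγg := hγ.mul_continuousMap_of_ae_mem hK hμK g
  have hγf := hγ.mul_continuousMap_of_ae_mem hK hμK f
  calc dist (∫ x, γ x * g x ∂μ) 0 = |∫ x, γ x * (g x - f x) ∂μ| := by
        simp only [mul_sub, integral_sub hγg hγf, hγA f hfA, sub_zero, Real.dist_eq]
    _ ≤ ∫ x, |γ x| * (ε / (C + 1)) ∂μ := by
        refine (abs_integral_le_integral_abs).trans (integral_mono_ae ?_ ?_ ?_)
        · exact (hγg.sub hγf).abs.congr
            (ae_of_all _ fun x => by simp only [Pi.sub_apply, mul_sub])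
        · exact hγ.abs.mul_const _
        · filter_upwards [hμK] with x hx
          rw [abs_mul, abs_sub_comm]
          exact mul_le_mul_of_nonneg_left (hfg x hx).le (abs_nonneg _)
    _ = C * (ε / (C + 1)) := integral_mul_const _ _
    _ ≤ ε := by
        have hC : 0 ≤ C := integral_nonneg fun x => abs_nonneg _
        rw [mul_div_assoc', div_le_iff₀ (by positivity)]
        nlinarith

end IntegralAgainstContinuous

theorem ae_eq_zero_of_integral_mul_eq_zero_of_forall_mem_subalgebra {E : Type*}
    [NormedAddCommGroup E] [NormedSpace ℝ E] [FiniteDimensional ℝ E] [MeasurableSpace E]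
    [BorelSpace E] {μ : Measure E} {K : Set E} {γ : E → ℝ} (hK : IsCompact K)
    (hμK : ∀ᵐ x ∂μ, x ∈ K) (hγ : Integrable γ μ) {A : Subalgebra ℝ C(E, ℝ)}
    (hA : ∀ x ∈ K, ∀ y ∈ K, x ≠ y → ∃ f ∈ A, f x ≠ f y)
    (hγA : ∀ f ∈ A, ∫ x, γ x * f x ∂μ = 0) : ∀ᵐ x ∂μ, γ x = 0 := by
  refine ae_eq_zero_of_integral_contDiff_smul_eq_zero hγ.locallyIntegrable fun g hg _ => ?_
  simp_rw [smul_eq_mul, mul_comm (g _)]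
  exact integral_mul_eq_zero_of_forall_mem_subalgebra hK hμK hγ hA hγA ⟨g, hg.continuous⟩

theorem HasDerivAt.hasGradientAt_im {f : ℂ → ℂ} {f' z : ℂ} (hf : HasDerivAt f f' z) :
    HasGradientAt (fun w => (f w).im) (Complex.I * conj f') z := by
  rw [hasGradientAt_iff_hasFDerivAt]
  refine (Complex.imCLM.hasFDerivAt.comp z (hf.hasFDerivAt.restrictScalars ℝ)).congr_fderiv ?_
  ext v
  simp only [ContinuousLinearMap.comp_apply, ContinuousLinearMap.coe_restrictScalars',
    ContinuousLinearMap.toSpanSingleton_apply, smul_eq_mul, Complex.imCLM_apply,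
    InnerProductSpace.toDual_apply_apply, Complex.inner, map_mul, Complex.conj_I, Complex.conj_conj]
  rw [show v * (-Complex.I * f') = -(Complex.I * (v * f')) by ring, Complex.neg_re,
    Complex.I_mul_re, neg_neg]

theorem inner_I_mul_conj (p q : ℂ) :
    ⟪Complex.I * conj p, Complex.I * conj q⟫ = (p * conj q).re := by
  rw [Complex.inner, map_mul, Complex.conj_I, Complex.conj_conj]
  congr 1
  linear_combination (-p * conj q) * Complex.I_sq

def reMonomial (a b : ℕ) : C(ℂ, ℝ) :=
  ⟨fun z => (z ^ a * conj z ^ b).re, by fun_prop⟩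

@[simp]
theorem reMonomial_apply (a b : ℕ) (z : ℂ) : reMonomial a b z = (z ^ a * conj z ^ b).re := rfl

theorem reMonomial_mul (a b c d : ℕ) :
    reMonomial a b * reMonomial c d =
      (2⁻¹ : ℝ) • (reMonomial (a + c) (b + d) + reMonomial (a + d) (b + c)) := by
  ext z
  simp only [ContinuousMap.mul_apply, ContinuousMap.smul_apply, ContinuousMap.add_apply,
    reMonomial_apply, smul_eq_mul]
  have re_mul_re (u v : ℂ) : u.re * v.re = 2⁻¹ * ((u * v).re + (u * conj v).re) := by
    simp only [Complex.mul_re, Complex.conj_re, Complex.conj_im]; ring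
  rw [re_mul_re]
  simp only [map_mul, map_pow, Complex.conj_conj, pow_add]
  ring_nf

theorem span_range_reMonomial_mul_le :
    Submodule.span ℝ (Set.range (Function.uncurry reMonomial)) *
        Submodule.span ℝ (Set.range (Function.uncurry reMonomial)) ≤
      Submodule.span ℝ (Set.range (Function.uncurry reMonomial)) := by
  rw [Submodule.span_mul_span, Submodule.span_le]
  rintro _ ⟨_, ⟨⟨a, b⟩, rfl⟩, _, ⟨⟨c, d⟩, rfl⟩, rfl⟩
  simp only [Function.uncurry_apply_pair, reMonomial_mul, SetLike.mem_coe]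
  exact Submodule.smul_mem _ _ (add_mem (Submodule.subset_span ⟨(a + c, b + d), rfl⟩)
    (Submodule.subset_span ⟨(a + d, b + c), rfl⟩))

noncomputable def reMonomialSubalgebra : Subalgebra ℝ C(ℂ, ℝ) :=
  (Submodule.span ℝ (Set.range (Function.uncurry reMonomial))).toSubalgebra
    (Submodule.subset_span ⟨(0, 0), by ext; simp⟩)
    (fun _ _ hf hg => span_range_reMonomial_mul_le (Submodule.mul_mem_mul hf hg))

theorem reMonomial_mem_reMonomialSubalgebra (a b : ℕ) : reMonomial a b ∈ reMonomialSubalgebra :=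
  Submodule.subset_span ⟨(a, b), rfl⟩

theorem reMonomialSubalgebra_separatesPoints {z w : ℂ} (hz : 0 ≤ z.im) (hw : 0 ≤ w.im)
    (hzw : z ≠ w) : ∃ f ∈ reMonomialSubalgebra, f z ≠ f w := by
  by_cases hre : z.re = w.re
  · have him : z.im ^ 2 ≠ w.im ^ 2 := fun h => hzw (Complex.ext hre
      ((sq_eq_sq₀ hz hw).1 h))
    -- `|z|² - Re z² = 2 (Im z)²`
    refine ⟨reMonomial 1 1 - reMonomial 2 0,
      sub_mem (reMonomial_mem_reMonomialSubalgebra 1 1) (reMonomial_mem_reMonomialSubalgebra 2 0),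
      fun h => him ?_⟩
    simp only [ContinuousMap.sub_apply, reMonomial_apply, pow_one, pow_zero, mul_one, sq,
      Complex.mul_re, Complex.conj_re, Complex.conj_im] at h
    linarith
  · exact ⟨reMonomial 1 0, reMonomial_mem_reMonomialSubalgebra 1 0, by simpa using hre⟩

theorem inner_gradient_im_pow_succ (a b : ℕ) (z : ℂ) :
    ⟪gradient (fun w : ℂ => (w ^ (a + 1)).im) z, gradient (fun w : ℂ => (w ^ (b + 1)).im) z⟫ =
      ((a + 1) * (b + 1) : ℝ) * reMonomial a b z := by
  rw [(hasDerivAt_pow _ z).hasGradientAt_im.gradient,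
    (hasDerivAt_pow _ z).hasGradientAt_im.gradient, inner_I_mul_conj, reMonomial_apply,
    ← Complex.re_ofReal_mul]
  congr 1
  simp only [add_tsub_cancel_right, map_mul, map_natCast, map_pow]
  push_cast
  ring

/-- uniqueness for the linearized incomplete problem on the upper half
disk `Ω_h = {z : |z| < 1, Im z > 0}`. If `γ ∈ L²(Ω_h)` satisfies
`∫_{Ω_h} γ ⟨∇Im(z^n), ∇Im(z^k)⟩ = 0` for all `n, k ≥ 1`, then `γ = 0` a.e. on `Ω_h`. -/
theorem linearized_EIT_half_disk_uniqueness (γ : ℂ → ℝ)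
    (hγ : MemLp γ 2 (volume.restrict {z : ℂ | ‖z‖ < 1 ∧ 0 < z.im}))
    (h : ∀ n k : ℕ, 1 ≤ n → 1 ≤ k →
      (∫ z in {z : ℂ | ‖z‖ < 1 ∧ 0 < z.im},
        γ z * ⟪gradient (fun w : ℂ => (w ^ n).im) z,
               gradient (fun w : ℂ => (w ^ k).im) z⟫) = 0) :
    ∀ᵐ z ∂(volume.restrict {z : ℂ | ‖z‖ < 1 ∧ 0 < z.im}), γ z = 0 := by
  set Ω := {z : ℂ | ‖z‖ < 1 ∧ 0 < z.im}
  set K := Metric.closedBall (0 : ℂ) 1 ∩ {z | 0 ≤ z.im}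
  have hK : IsCompact K :=
    (isCompact_closedBall 0 1).inter_right (isClosed_le continuous_const Complex.continuous_im)
  have hΩ : MeasurableSet Ω := by measurability
  have hΩK : ∀ᵐ z ∂(volume.restrict Ω), z ∈ K :=
    (ae_restrict_mem hΩ).mono fun z hz => ⟨by simpa using hz.1.le, hz.2.le⟩
  have : IsFiniteMeasure (volume.restrict Ω) := isFiniteMeasure_restrict.2
    ((measure_mono (t := Metric.ball (0 : ℂ) 1) fun z hz => by simpa using hz.1).trans_lt
      measure_ball_lt_top).ne
  have hγ₁ : Integrable γ (volume.restrict Ω) := hγ.integrable one_le_two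
  have hmom (a b : ℕ) : ∫ z in Ω, γ z * reMonomial a b z = 0 := by
    have hab := h (a + 1) (b + 1) (Nat.le_add_left 1 a) (Nat.le_add_left 1 b)
    simp only [inner_gradient_im_pow_succ, mul_left_comm (γ _), integral_const_mul] at hab
    exact (mul_eq_zero.1 hab).resolve_left (by positivity)
  refine ae_eq_zero_of_integral_mul_eq_zero_of_forall_mem_subalgebra hK hΩK hγ₁
    (fun z hz w hw => reMonomialSubalgebra_separatesPoints hz.2 hw.2)
    fun f hf => integral_mul_eq_zero_of_mem_span hK hΩK hγ₁ ?_ hf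
  rintro _ ⟨⟨a, b⟩, rfl⟩
  exact hmom a b
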